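/- For every quantifier-free SMT formula F over d real variables (built inductively from atoms w·x + b > 0 and w·x + b ≥ 0, negation, conjunction, and disjunction), the continuous semantic value M_F with the product t-norm satisfies: (i) 0 ≤ M_F(x; B, ε) ≤ 1 for all x ∈ ℝ^d, B, ε; and (ii) for every x ∈ ℝ^d and all sequences (ε_n) of positive reals with ε_n → 0 and (B_n) of reals with B_n·ε_n → +∞, the sequence M_F(x; B_n, ε_n) converges to 1 if F(x) is true and converges to 0 if F(x) is false. -/

import Mathlib

open Filter Topology

/-- Quantifier-free SMT formulas over `d` real variables, built from
linear atoms `w·x + b > 0` and `w·x + b ≥ 0`, negation, conjunction and disjunction. -/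
inductive SMTFormula (d : ℕ) where
  | gt (w : Fin d → ℝ) (b : ℝ) : SMTFormula d
  | ge (w : Fin d → ℝ) (b : ℝ) : SMTFormula d
  | not (F : SMTFormula d) : SMTFormula d
  | and (F₁ F₂ : SMTFormula d) : SMTFormula d
  | or (F₁ F₂ : SMTFormula d) : SMTFormula d

/-- Boolean semantics of a quantifier-free SMT formula. -/
def SMTFormula.sem {d : ℕ} : SMTFormula d → (Fin d → ℝ) → Prop
  | .gt w b, x => (∑ i, w i * x i) + b > 0
  | .ge w b, x => (∑ i, w i * x i) + b ≥ 0
  | .not F, x => ¬ F.sem x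
  | .and F₁ F₂, x => F₁.sem x ∧ F₂.sem x
  | .or F₁ F₂, x => F₁.sem x ∨ F₂.sem x

/-- Continuous semantic value of a formula (CLN model output) with the
product t-norm and t-conorm, scaling factor `B` and offset `ε`. -/
noncomputable def SMTFormula.val {d : ℕ} : SMTFormula d → (Fin d → ℝ) → ℝ → ℝ → ℝ
  | .gt w b, x, B, ε => 1 / (1 + Real.exp (-B * ((∑ i, w i * x i) + b - ε)))
  | .ge w b, x, B, ε => 1 / (1 + Real.exp (-B * ((∑ i, w i * x i) + b + ε)))
  | .not F, x, B, ε => 1 - F.val x B ε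
  | .and F₁ F₂, x, B, ε => F₁.val x B ε * F₂.val x B ε
  | .or F₁ F₂, x, B, ε => F₁.val x B ε + F₂.val x B ε - F₁.val x B ε * F₂.val x B ε

open Real

/-!
With `s = w·x + b` and `σ` the logistic sigmoid, the atom `s > 0` evaluates to `σ(B (s - ε))` and
`s ≥ 0` to `σ(B (s + ε))`. The offset moves each threshold to the side where, as soon as
`ε < |s| / 2`, the argument is at least `B ε` when the atom holds and at most `-B ε` when it fails;
since `B ε → ∞`, the sigmoid tends to the truth value. The connectives are polynomials that map
`[0, 1]` into itself and agree with the boolean operations on `{0, 1}`, so the bounds and the limits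
pass through them by structural induction.
-/

section ScaledOffset

variable {ε B u : ℕ → ℝ}

lemma eventually_pos_of_tendsto_mul_atTop (hε : ∀ n, 0 < ε n)
    (hBε : Tendsto (fun n => B n * ε n) atTop atTop) : ∀ᶠ n in atTop, 0 < B n :=
  (hBε.eventually_gt_atTop 0).mono fun n h => pos_of_mul_pos_left h (hε n).le

lemma tendsto_mul_atTop_of_eventually_le (hε : ∀ n, 0 < ε n)
    (hBε : Tendsto (fun n => B n * ε n) atTop atTop) (h : ∀ᶠ n in atTop, ε n ≤ u n) :
    Tendsto (fun n => B n * u n) atTop atTop := by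
  refine tendsto_atTop_mono' atTop ?_ hBε
  filter_upwards [h, eventually_pos_of_tendsto_mul_atTop hε hBε] with n hu hB
  exact mul_le_mul_of_nonneg_left hu hB.le

lemma tendsto_mul_atBot_of_eventually_le (hε : ∀ n, 0 < ε n)
    (hBε : Tendsto (fun n => B n * ε n) atTop atTop) (h : ∀ᶠ n in atTop, u n ≤ -ε n) :
    Tendsto (fun n => B n * u n) atTop atBot := by
  have hneg : Tendsto (fun n => B n * -u n) atTop atTop :=
    tendsto_mul_atTop_of_eventually_le hε hBε (h.mono fun n hn => le_neg_of_le_neg hn)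
  exact tendsto_neg_atTop_iff.mp (by simpa only [mul_neg] using hneg)

lemma tendsto_sigmoid_mul_sub (hε : ∀ n, 0 < ε n) (hε0 : Tendsto ε atTop (𝓝 0))
    (hBε : Tendsto (fun n => B n * ε n) atTop atTop) (s : ℝ) :
    Tendsto (fun n => sigmoid (B n * (s - ε n))) atTop (𝓝 (if 0 < s then 1 else 0)) := by
  split_ifs with hs
  · have hsmall : ∀ᶠ n in atTop, ε n < s / 2 := hε0.eventually (gt_mem_nhds (half_pos hs))
    refine tendsto_sigmoid_atTop.comp (tendsto_mul_atTop_of_eventually_le hε hBε ?_)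
    filter_upwards [hsmall] with n hn
    linarith
  · refine tendsto_sigmoid_atBot.comp (tendsto_mul_atBot_of_eventually_le hε hBε ?_)
    exact Eventually.of_forall fun n => by linarith

lemma tendsto_sigmoid_mul_add (hε : ∀ n, 0 < ε n) (hε0 : Tendsto ε atTop (𝓝 0))
    (hBε : Tendsto (fun n => B n * ε n) atTop atTop) (s : ℝ) :
    Tendsto (fun n => sigmoid (B n * (s + ε n))) atTop (𝓝 (if 0 ≤ s then 1 else 0)) := by
  split_ifs with hs
  · refine tendsto_sigmoid_atTop.comp (tendsto_mul_atTop_of_eventually_le hε hBε ?_)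
    exact Eventually.of_forall fun n => by linarith
  · have hsmall : ∀ᶠ n in atTop, ε n < -s / 2 :=
      hε0.eventually (gt_mem_nhds (by linarith))
    refine tendsto_sigmoid_atBot.comp (tendsto_mul_atBot_of_eventually_le hε hBε ?_)
    filter_upwards [hsmall] with n hn
    linarith

end ScaledOffset

namespace SMTFormula

variable {d : ℕ}

lemma val_gt (w : Fin d → ℝ) (b : ℝ) (x : Fin d → ℝ) (B ε : ℝ) :
    (gt w b).val x B ε = sigmoid (B * ((∑ i, w i * x i) + b - ε)) := by
  rw [val, sigmoid_def, one_div, neg_mul]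

lemma val_ge (w : Fin d → ℝ) (b : ℝ) (x : Fin d → ℝ) (B ε : ℝ) :
    (ge w b).val x B ε = sigmoid (B * ((∑ i, w i * x i) + b + ε)) := by
  rw [val, sigmoid_def, one_div, neg_mul]

lemma val_mem_Icc (F : SMTFormula d) (x : Fin d → ℝ) (B ε : ℝ) :
    F.val x B ε ∈ Set.Icc 0 1 := by
  induction F with
  | gt w b => rw [val_gt]; exact ⟨sigmoid_nonneg _, sigmoid_le_one _⟩
  | ge w b => rw [val_ge]; exact ⟨sigmoid_nonneg _, sigmoid_le_one _⟩
  | not F ih => exact Set.Icc.mem_iff_one_sub_mem.mp ih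
  | and F₁ F₂ ih₁ ih₂ => exact unitInterval.mul_mem ih₁ ih₂
  | or F₁ F₂ ih₁ ih₂ =>
    have hdual : (F₁.or F₂).val x B ε = 1 - (1 - F₁.val x B ε) * (1 - F₂.val x B ε) := by
      rw [val]; ring
    rw [hdual]
    exact Set.Icc.mem_iff_one_sub_mem.mp (unitInterval.mul_mem
      (Set.Icc.mem_iff_one_sub_mem.mp ih₁) (Set.Icc.mem_iff_one_sub_mem.mp ih₂))

open Classical in
theorem tendsto_val (F : SMTFormula d) (x : Fin d → ℝ) {ε B : ℕ → ℝ} (hε : ∀ n, 0 < ε n)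
    (hε0 : Tendsto ε atTop (𝓝 0)) (hBε : Tendsto (fun n => B n * ε n) atTop atTop) :
    Tendsto (fun n => F.val x (B n) (ε n)) atTop (𝓝 (if F.sem x then 1 else 0)) := by
  induction F with
  | gt w b => simpa only [val_gt, sem, gt_iff_lt] using tendsto_sigmoid_mul_sub hε hε0 hBε _
  | ge w b => simpa only [val_ge, sem, ge_iff_le] using tendsto_sigmoid_mul_add hε hε0 hBε _
  | not F ih =>
    simp only [val]
    convert (tendsto_const_nhds (x := (1 : ℝ))).sub ih using 2
    by_cases h : F.sem x <;> simp [sem, h]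
  | and F₁ F₂ ih₁ ih₂ =>
    simp only [val]
    convert ih₁.mul ih₂ using 2
    by_cases h₁ : F₁.sem x <;> by_cases h₂ : F₂.sem x <;> simp [sem, h₁, h₂]
  | or F₁ F₂ ih₁ ih₂ =>
    simp only [val]
    convert (ih₁.add ih₂).sub (ih₁.mul ih₂) using 1
    by_cases h₁ : F₁.sem x <;> by_cases h₂ : F₂.sem x <;> simp [sem, h₁, h₂]

end SMTFormula

theorem stmt_9 {d : ℕ} (F : SMTFormula d) :
    (∀ (x : Fin d → ℝ) (B ε : ℝ), 0 ≤ F.val x B ε ∧ F.val x B ε ≤ 1) ∧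
    (∀ (x : Fin d → ℝ) (ε B : ℕ → ℝ),
      (∀ n, 0 < ε n) → Tendsto ε atTop (𝓝 0) →
      Tendsto (fun n => B n * ε n) atTop atTop →
      (F.sem x → Tendsto (fun n => F.val x (B n) (ε n)) atTop (𝓝 1)) ∧
      (¬ F.sem x → Tendsto (fun n => F.val x (B n) (ε n)) atTop (𝓝 0))) := by
  refine ⟨F.val_mem_Icc, fun x ε B hε hε0 hBε => ?_⟩
  have hlim := F.tendsto_val x hε hε0 hBε
  exact ⟨fun h => by simpa [h] using hlim, fun h => by simpa [h] using hlim⟩
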